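/- arXiv:2110.14321 — 5 statements merged into one kernel-verified Lean document; each statement's English description precedes it below -/
import Mathlib

section
/- Let the real numbers λ_1,…,λ_n be linearly independent over the field of rational numbers, let c_1,…,c_n be complex numbers, and let f(x)=∑_{k=1}^n c_k e^{iλ_k x}. Then for every x_0 ∈ ℝ and every complex number z with |z| = |f(x_0)|, z belongs both to Δ_+ and to Δ_-; in particular Δ_+ = Δ_- = Δ and this common set contains every circle {z : |z| = |f(x_0)|}, x_0 ∈ ℝ. -/
/-!
The limit sets are closed, so it suffices to show that every rotation `e^{iα} f(x₀)` lies in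
`Δ₊` and in `Δ₋` (then both equal the closure of the range of `f`). By Kronecker's theorem the
curve `x ↦ (e^{iλ_k x})_k` accumulates, as `x → +∞`, at every point of the torus, in particular
at `(e^{i(λ_k x₀ + α)})_k`; applying the continuous map `u ↦ ∑ c_k u_k` gives the claim for `Δ₊`,
and `x ↦ -x` turns it into the claim for `Δ₋`.

Kronecker's theorem is proved by Bohr's argument. If the curve stayed `ε` away from
`(e^{iθ_k})_k` for `x ≥ N`, then `G(x) = ∏_k (2 + 2 cos(λ_k x - θ_k))` would be at most
`A = (4 - ε²) 4^{n-1}` there. Now `G^m` is a trigonometric polynomial whose frequencies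
`∑_k (r_k - m) λ_k` vanish only for `r = (m, …, m)`, by linear independence, so its mean over long
intervals is its constant term `binom(2m, m)^n`; this exceeds `A^m` for large `m`, because
`binom(2m, m) > 4^m / m`.
-/

open Filter Topology

/-- The limit set `Δ₊`: points `z` such that `f (x j) → z` along some sequence `x j → +∞`. -/
def DeltaPlus (f : ℝ → ℂ) : Set ℂ :=
  {z | ∃ x : ℕ → ℝ, Tendsto x atTop atTop ∧ Tendsto (fun j => f (x j)) atTop (nhds z)}

/-- The limit set `Δ₋`: points `z` such that `f (x j) → z` along some sequence `x j → -∞`. -/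
def DeltaMinus (f : ℝ → ℂ) : Set ℂ :=
  {z | ∃ x : ℕ → ℝ, Tendsto x atTop atBot ∧ Tendsto (fun j => f (x j)) atTop (nhds z)}

open Complex Finset

theorem norm_cexp_mul_I_sub_sq (a b : ℝ) :
    ‖cexp (a * I) - cexp (b * I)‖ ^ 2 = 2 - 2 * Real.cos (a - b) := by
  rw [← normSq_eq_norm_sq, normSq_apply]
  simp only [sub_re, sub_im, exp_ofReal_mul_I_re, exp_ofReal_mul_I_im, Real.cos_sub]
  nlinarith [Real.sin_sq_add_cos_sq a, Real.sin_sq_add_cos_sq b]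

theorem prod_two_add_two_cos_sub_le {ι : Type*} [Fintype ι] [DecidableEq ι] (a b : ι → ℝ)
    (k : ι) : ∏ j, (2 + 2 * Real.cos (a j - b j)) ≤
      (4 - ‖cexp (a k * I) - cexp (b k * I)‖ ^ 2) * 4 ^ (Fintype.card ι - 1) := by
  have hnonneg (j : ι) : 0 ≤ 2 + 2 * Real.cos (a j - b j) := by
    linarith [Real.neg_one_le_cos (a j - b j)]
  have hk : 2 + 2 * Real.cos (a k - b k) = 4 - ‖cexp (a k * I) - cexp (b k * I)‖ ^ 2 := by
    rw [norm_cexp_mul_I_sub_sq]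
    ring
  calc ∏ j, (2 + 2 * Real.cos (a j - b j))
      = (2 + 2 * Real.cos (a k - b k)) * ∏ j ∈ univ.erase k, (2 + 2 * Real.cos (a j - b j)) :=
        (mul_prod_erase univ _ (mem_univ k)).symm
    _ ≤ (2 + 2 * Real.cos (a k - b k)) * ∏ j ∈ univ.erase k, (4 : ℝ) :=
        mul_le_mul_of_nonneg_left (prod_le_prod (fun j _ => hnonneg j)
          fun j _ => by linarith [Real.cos_le_one (a j - b j)]) (hnonneg k)
    _ = _ := by rw [hk, prod_const, card_erase_of_mem (mem_univ k), card_univ]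

theorem two_add_two_cos_pow_eq_sum (m : ℕ) (ψ : ℝ) :
    (((2 + 2 * Real.cos ψ) ^ m : ℝ) : ℂ) =
      ∑ r ∈ range (2 * m + 1), ((2 * m).choose r : ℂ) * cexp (↑(((r : ℝ) - m) * ψ) * I) := by
  set w := cexp (ψ * I)
  have hw : w ≠ 0 := exp_ne_zero _
  have hcos : ((2 + 2 * Real.cos ψ : ℝ) : ℂ) = (w + 1) ^ 2 * w⁻¹ := by
    simp only [w]
    push_cast
    rw [cos, neg_mul, exp_neg]
    field_simp
    ring
  rw [ofReal_pow, hcos, mul_pow, ← pow_mul, add_pow, sum_mul]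
  refine sum_congr rfl fun r _ => ?_
  rw [one_pow, mul_one, inv_pow, ← exp_nat_mul, ← exp_nat_mul, ← exp_neg, mul_right_comm,
    ← exp_add, mul_comm]
  push_cast
  ring_nf

theorem prod_two_add_two_cos_pow_eq_sum {ι : Type*} [Fintype ι] [DecidableEq ι]
    (lam θ : ι → ℝ) (m : ℕ) (x : ℝ) :
    (((∏ k, (2 + 2 * Real.cos (lam k * x - θ k))) ^ m : ℝ) : ℂ) =
      ∑ r ∈ Fintype.piFinset fun _ => range (2 * m + 1),
        (∏ k, ((2 * m).choose (r k) : ℂ)) * cexp (↑(-∑ k, ((r k : ℝ) - m) * θ k) * I) *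
          cexp (↑((∑ k, ((r k : ℝ) - m) * lam k) * x) * I) := by
  rw [← Finset.prod_pow, ofReal_prod]
  simp_rw [two_add_two_cos_pow_eq_sum]
  rw [prod_univ_sum]
  refine sum_congr rfl fun r _ => ?_
  rw [prod_mul_distrib, ← exp_sum, mul_assoc, ← exp_add]
  congr 2
  push_cast
  simp only [neg_mul, sum_mul, ← sum_neg_distrib, ← sum_add_distrib]
  exact sum_congr rfl fun k _ => by ring

theorem eq_const_of_sum_sub_mul_eq_zero {ι : Type*} [Fintype ι] {lam : ι → ℝ}
    (hlam : LinearIndependent ℚ lam) {r : ι → ℕ} {m : ℕ}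
    (h : ∑ k, ((r k : ℝ) - m) * lam k = 0) : r = fun _ => m := by
  have := Fintype.linearIndependent_iff.1 hlam (fun k => (r k : ℚ) - m)
    (by simpa [Rat.smul_def] using h)
  funext k
  exact_mod_cast sub_eq_zero.1 (this k)

theorem exists_pow_lt_choose_pow (n : ℕ) {A : ℝ} (hA₀ : 0 ≤ A) (hA : A < 4 ^ n) :
    ∃ m : ℕ, A ^ m < ((2 * m).choose m : ℝ) ^ n := by
  have hρ : |A / 4 ^ n| < 1 := by
    rw [abs_of_nonneg (by positivity), div_lt_one (by positivity)]
    exact hA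
  obtain ⟨m, hm, hm4⟩ := ((tendsto_pow_const_mul_const_pow_of_abs_lt_one n hρ).eventually
    (gt_mem_nhds one_pos)).and (eventually_ge_atTop 4) |>.exists
  refine ⟨m, lt_of_mul_lt_mul_right ?_ (by positivity : (0 : ℝ) ≤ (m : ℝ) ^ n)⟩
  have hbinom : (4 : ℝ) ^ m < m * (2 * m).choose m := by
    exact_mod_cast Nat.four_pow_lt_mul_centralBinom m hm4
  calc A ^ m * (m : ℝ) ^ n = (m : ℝ) ^ n * (A / 4 ^ n) ^ m * ((4 : ℝ) ^ m) ^ n := by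
        rw [div_pow, ← pow_mul, ← pow_mul, mul_comm n m]
        field_simp
    _ < 1 * ((4 : ℝ) ^ m) ^ n := by gcongr
    _ ≤ ((m : ℝ) * (2 * m).choose m) ^ n := by rw [one_mul]; gcongr
    _ = ((2 * m).choose m : ℝ) ^ n * (m : ℝ) ^ n := by rw [mul_pow, mul_comm]

theorem norm_integral_cexp_mul_I_le {ω : ℝ} (hω : ω ≠ 0) (a b : ℝ) :
    ‖∫ x in a..b, cexp (↑(ω * x) * I)‖ ≤ 2 / |ω| := by
  have hc : (ω : ℂ) * I ≠ 0 := mul_ne_zero (ofReal_ne_zero.2 hω) I_ne_zero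
  simp_rw [ofReal_mul, mul_right_comm _ _ I]
  rw [integral_exp_mul_complex hc, norm_div, norm_mul, norm_I, mul_one, norm_real,
    Real.norm_eq_abs]
  gcongr
  refine (norm_sub_le _ _).trans_eq ?_
  simp_rw [mul_right_comm _ I, ← ofReal_mul, norm_exp_ofReal_mul_I]
  norm_num

theorem re_coeff_le_of_eventually_le {κ : Type*} [DecidableEq κ] {s : Finset κ} {a : κ → ℂ}
    {ω : κ → ℝ} {r₀ : κ} (hr₀ : r₀ ∈ s) (hω₀ : ω r₀ = 0) (hω : ∀ r ∈ s, r ≠ r₀ → ω r ≠ 0)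
    {g : ℝ → ℝ} (hg : ∀ x, (g x : ℂ) = ∑ r ∈ s, a r * cexp (↑(ω r * x) * I)) {A : ℝ}
    (hA : ∀ᶠ x in atTop, g x ≤ A) : (a r₀).re ≤ A := by
  obtain ⟨N, hN⟩ := eventually_atTop.1 hA
  by_contra! hlt
  set K := ∑ r ∈ s.erase r₀, ‖a r‖ * (2 / |ω r|)
  set T := (K + 1) / ((a r₀).re - A)
  have hK : 0 ≤ K := sum_nonneg fun r _ => by positivity
  have hT : 0 < T := div_pos (by linarith) (sub_pos.2 hlt)
  have hcont : Continuous g := by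
    have : g = fun x => (∑ r ∈ s, a r * cexp (↑(ω r * x) * I)).re :=
      funext fun x => by rw [← hg, ofReal_re]
    rw [this]
    fun_prop
  set rest := ∑ r ∈ s.erase r₀, a r * ∫ x in N..N + T, cexp (↑(ω r * x) * I)
  have hsplit : ((∫ x in N..N + T, g x : ℝ) : ℂ) = T * a r₀ + rest := by
    rw [← intervalIntegral.integral_ofReal, intervalIntegral.integral_congr fun x _ => hg x,
      intervalIntegral.integral_finsetSum fun r _ =>
        (by fun_prop : Continuous _).intervalIntegrable _ _, ← add_sum_erase _ _ hr₀]
    simp only [intervalIntegral.integral_const_mul]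
    congr 1
    simp [hω₀, mul_comm]
  have hrest : ‖rest‖ ≤ K := by
    refine (norm_sum_le _ _).trans (sum_le_sum fun r hr => ?_)
    rw [norm_mul]
    gcongr
    exact norm_integral_cexp_mul_I_le (hω r (mem_of_mem_erase hr) (ne_of_mem_erase hr)) _ _
  have hupper : ∫ x in N..N + T, g x ≤ T * A := by
    calc ∫ x in N..N + T, g x ≤ ∫ _ in N..N + T, A :=
          intervalIntegral.integral_mono_on (by linarith) (hcont.intervalIntegrable _ _)
            intervalIntegrable_const fun x hx => hN x hx.1
      _ = T * A := by simp
  have hlower : T * (a r₀).re - K ≤ ∫ x in N..N + T, g x := by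
    have := congrArg re hsplit
    rw [ofReal_re, add_re, re_ofReal_mul] at this
    linarith [neg_abs_le rest.re, abs_re_le_norm rest]
  have hTK : T * ((a r₀).re - A) = K + 1 := div_mul_cancel₀ _ (sub_pos.2 hlt).ne'
  linarith [mul_sub T (a r₀).re A]

theorem mapClusterPt_atTop_cexp_of_linearIndependent {ι : Type*} [Fintype ι] {lam : ι → ℝ}
    (hlam : LinearIndependent ℚ lam) (θ : ι → ℝ) :
    MapClusterPt (fun k => cexp (θ k * I)) atTop (fun x k => cexp (↑(lam k * x) * I)) := by
  classical
  rw [Metric.nhds_basis_ball.mapClusterPt_iff_frequently]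
  intro ε hε
  by_contra hnear
  obtain ⟨N, hfar⟩ : ∃ N, ∀ x ≥ N, ∃ k, ε ≤ ‖cexp (↑(lam k * x) * I) - cexp (θ k * I)‖ := by
    simpa [Metric.mem_ball, dist_pi_lt_iff hε, dist_eq] using hnear
  set G : ℝ → ℝ := fun x => ∏ k, (2 + 2 * Real.cos (lam k * x - θ k))
  have hG₀ (x : ℝ) : 0 ≤ G x :=
    prod_nonneg fun k _ => by linarith [Real.neg_one_le_cos (lam k * x - θ k)]
  have hG (x : ℝ) (hx : N ≤ x) : G x ≤ (4 - ε ^ 2) * 4 ^ (Fintype.card ι - 1) := by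
    obtain ⟨k, hk⟩ := hfar x hx
    refine (prod_two_add_two_cos_sub_le (fun j => lam j * x) θ k).trans ?_
    gcongr
  have hA₀ : 0 ≤ (4 - ε ^ 2) * 4 ^ (Fintype.card ι - 1) := (hG₀ N).trans (hG N le_rfl)
  have hA : (4 - ε ^ 2) * 4 ^ (Fintype.card ι - 1) < 4 ^ Fintype.card ι := by
    obtain ⟨k, -⟩ := hfar N le_rfl
    calc (4 - ε ^ 2) * 4 ^ (Fintype.card ι - 1) < 4 * 4 ^ (Fintype.card ι - 1) := by
          gcongr
          linarith [pow_pos hε 2]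
      _ = 4 ^ Fintype.card ι := by
          rw [← pow_succ', Nat.sub_add_cancel (Fintype.card_pos_iff.2 ⟨k⟩)]
  obtain ⟨m, hm⟩ := exists_pow_lt_choose_pow _ hA₀ hA
  refine hm.not_ge ?_
  have hmean := re_coeff_le_of_eventually_le (r₀ := fun _ => m) (g := fun x => G x ^ m)
    (s := Fintype.piFinset fun _ => range (2 * m + 1))
    (a := fun r => (∏ k, ((2 * m).choose (r k) : ℂ)) * cexp (↑(-∑ k, ((r k : ℝ) - m) * θ k) * I))
    (ω := fun r => ∑ k, ((r k : ℝ) - m) * lam k)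
    (Fintype.mem_piFinset.2 fun _ => mem_range.2 (by omega)) (by simp)
    (fun r _ hr h => hr (eq_const_of_sum_sub_mul_eq_zero hlam h))
    (prod_two_add_two_cos_pow_eq_sum lam θ m)
    (eventually_atTop.2 ⟨N, fun x hx => pow_le_pow_left₀ (hG₀ x) (hG x hx) m⟩)
  simp only [sub_self, zero_mul, sum_const_zero, neg_zero, ofReal_zero, exp_zero, mul_one,
    prod_const, card_univ] at hmean
  rwa [← ofReal_natCast, ← ofReal_pow, ofReal_re] at hmean

section LimitSets

variable {f : ℝ → ℂ}

theorem mem_deltaPlus_iff {z : ℂ} : z ∈ DeltaPlus f ↔ MapClusterPt z atTop f :=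
  ⟨fun ⟨_, hx, hfx⟩ => .of_comp hx hfx.mapClusterPt,
    fun h => let ⟨x, hfx, hx⟩ := h.exists_seq_tendsto; ⟨x, hx, hfx⟩⟩

theorem deltaMinus_eq_deltaPlus_comp_neg : DeltaMinus f = DeltaPlus (f ∘ Neg.neg) := by
  ext z
  constructor
  · rintro ⟨x, hx, hfx⟩
    exact ⟨-x, tendsto_neg_atBot_atTop.comp hx, by simpa using hfx⟩
  · rintro ⟨x, hx, hfx⟩
    exact ⟨fun j => -x j, tendsto_neg_atTop_atBot.comp hx, hfx⟩

theorem deltaPlus_eq_closure_range (h : Set.range f ⊆ DeltaPlus f) :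
    DeltaPlus f = closure (Set.range f) := by
  refine Set.Subset.antisymm (fun z ⟨x, _, hfx⟩ => mem_closure_of_tendsto hfx
    (Eventually.of_forall fun j => Set.mem_range_self (x j))) (closure_minimal h ?_)
  have : DeltaPlus f = {z | ClusterPt z (map f atTop)} := by
    ext z
    exact mem_deltaPlus_iff
  rw [this]
  exact isClosed_setOfPred_clusterPt

theorem deltaMinus_eq_closure_range (h : Set.range f ⊆ DeltaMinus f) :
    DeltaMinus f = closure (Set.range f) := by
  rw [deltaMinus_eq_deltaPlus_comp_neg, ← neg_surjective.range_comp f] at h ⊢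
  exact deltaPlus_eq_closure_range h

end LimitSets

theorem exists_cexp_mul_eq_of_norm_eq {w z : ℂ} (h : ‖z‖ = ‖w‖) :
    ∃ α : ℝ, cexp (α * I) * w = z := by
  rcases eq_or_ne w 0 with rfl | hw
  · exact ⟨0, by rw [mul_zero, eq_comm, ← norm_eq_zero, h, norm_zero]⟩
  · obtain ⟨α, hα⟩ := (norm_eq_one_iff (z / w)).1 (by rw [norm_div, h, div_self (by simpa)])
    exact ⟨α, by rw [hα, div_mul_cancel₀ _ hw]⟩

theorem cexp_mul_mem_deltaPlus {ι : Type*} [Fintype ι] {lam : ι → ℝ}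
    (hlam : LinearIndependent ℚ lam) {c : ι → ℂ} {f : ℝ → ℂ}
    (hf : ∀ x, f x = ∑ k, c k * cexp (↑(lam k * x) * I)) (x₀ α : ℝ) :
    cexp (α * I) * f x₀ ∈ DeltaPlus f := by
  rw [mem_deltaPlus_iff]
  have hφ : Continuous fun u : ι → ℂ => ∑ k, c k * u k := by fun_prop
  convert (mapClusterPt_atTop_cexp_of_linearIndependent hlam
    (fun k => lam k * x₀ + α)).continuousAt_comp hφ.continuousAt using 1
  · rw [hf, mul_sum]
    refine sum_congr rfl fun k _ => ?_
    rw [mul_left_comm, ← Complex.exp_add]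
    push_cast
    ring_nf
  · exact funext hf

theorem stmt_0 (n : ℕ) (lam : Fin n → ℝ) (c : Fin n → ℂ)
    (hindep : ∀ r : Fin n → ℚ, (∑ k, (r k : ℝ) * lam k) = 0 → ∀ k, r k = 0)
    (f : ℝ → ℂ)
    (hf : ∀ x : ℝ, f x = ∑ k, c k * Complex.exp (Complex.I * (lam k : ℂ) * (x : ℂ))) :
    (∀ x₀ : ℝ, ∀ z : ℂ, ‖z‖ = ‖f x₀‖ →
      z ∈ DeltaPlus f ∧ z ∈ DeltaMinus f) ∧
    DeltaPlus f = DeltaMinus f := by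
  have hlam : LinearIndependent ℚ lam :=
    Fintype.linearIndependent_iff.2 fun r hr => hindep r (by simpa [Rat.smul_def] using hr)
  have hf' (x : ℝ) : f x = ∑ k, c k * cexp (↑(lam k * x) * I) := by
    simp only [hf, ofReal_mul, mul_comm I, mul_assoc]
  have hplus := cexp_mul_mem_deltaPlus hlam hf'
  have hminus (x₀ α : ℝ) : cexp (α * I) * f x₀ ∈ DeltaMinus f := by
    rw [deltaMinus_eq_deltaPlus_comp_neg]
    simpa using cexp_mul_mem_deltaPlus hlam.neg (c := c) (f := f ∘ Neg.neg)
      (fun x => by simp [hf']) (-x₀) α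
  refine ⟨fun x₀ z hz => ?_, ?_⟩
  · obtain ⟨α, rfl⟩ := exists_cexp_mul_eq_of_norm_eq hz
    exact ⟨hplus x₀ α, hminus x₀ α⟩
  · rw [deltaPlus_eq_closure_range (by rintro _ ⟨x₀, rfl⟩; simpa using hplus x₀ 0),
      deltaMinus_eq_closure_range (by rintro _ ⟨x₀, rfl⟩; simpa using hminus x₀ 0)]
end

section
/- Let the real numbers λ_1,…,λ_n be linearly independent over the field of rational numbers, let c_1,…,c_n be complex numbers, and let f(x)=∑_{k=1}^n c_k e^{iλ_k x}. Then sup_{x∈ℝ} |f(x)| = ∑_{k=1}^n |c_k|. -/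
/-!
The upper bound is the triangle inequality. For the lower bound let `S = sup |f|`. The mean value
`lim T⁻¹ ∫₀ᵀ` of a trigonometric polynomial is its constant term, which is therefore bounded by
its sup norm; applied to `|P|²` this is Bessel's inequality `∑ |aᵢ|² ≤ sup |P|²` for distinct
frequencies. By `ℚ`-independence the frequencies `∑ bₖ λₖ` of `f ^ m`, indexed by the at most
`(m + 1) ^ n` exponent vectors `b` with `|b| = m`, are distinct, so Cauchy–Schwarz gives
`(∑ |cₖ|) ^ (2m) ≤ (m + 1) ^ n * S ^ (2m)`, and letting `m → ∞` yields `∑ |cₖ| ≤ S`.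
-/

open Complex ComplexConjugate Filter Topology Finset

lemma tendsto_average_exp_I_mul (μ : ℝ) :
    Tendsto (fun T : ℝ => T⁻¹ • ∫ x in (0 : ℝ)..T, exp (I * μ * x)) atTop
      (𝓝 (if μ = 0 then 1 else 0)) := by
  rcases eq_or_ne μ 0 with rfl | hμ
  · refine tendsto_const_nhds.congr' ?_
    filter_upwards [eventually_ne_atTop 0] with T hT
    simp [hT]
  · have hIμ : I * μ ≠ 0 := by simp [hμ]
    have hbdd : ∀ T : ℝ, ‖∫ x in (0 : ℝ)..T, exp (I * μ * x)‖ ≤ 2 / |μ| := by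
      intro T
      rw [integral_exp_mul_complex hIμ, norm_div]
      gcongr
      · calc _ ≤ ‖exp (I * μ * T)‖ + ‖exp (I * μ * (0 : ℝ))‖ := norm_sub_le _ _
          _ = 2 := by simp only [← ofReal_mul, mul_assoc, norm_exp_I_mul_ofReal]; norm_num
      · simp
    rw [if_neg hμ]
    exact tendsto_inv_atTop_zero.zero_smul_isBoundedUnder_le (isBoundedUnder_of ⟨2 / |μ|, hbdd⟩)

section

variable {ι : Type*} (s : Finset ι) (a : ι → ℂ) (μ : ι → ℝ)

lemma norm_sum_mul_exp_I_mul_le (x : ℝ) :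
    ‖∑ i ∈ s, a i * exp (I * μ i * x)‖ ≤ ∑ i ∈ s, ‖a i‖ :=
  (norm_sum_le _ _).trans_eq <| sum_congr rfl fun i _ => by
    rw [norm_mul, mul_assoc, ← ofReal_mul, norm_exp_I_mul_ofReal, mul_one]

lemma tendsto_average_sum_mul_exp_I_mul :
    Tendsto (fun T : ℝ => T⁻¹ • ∫ x in (0 : ℝ)..T, ∑ i ∈ s, a i * exp (I * μ i * x)) atTop
      (𝓝 (∑ i ∈ s with μ i = 0, a i)) := by
  have hint : ∀ i T, IntervalIntegrable (fun x : ℝ => a i * exp (I * μ i * x))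
      MeasureTheory.volume 0 T := fun i T => (by fun_prop : Continuous _).intervalIntegrable _ _
  simp_rw [intervalIntegral.integral_finsetSum fun i _ => hint i _,
    intervalIntegral.integral_const_mul, smul_sum, sum_filter]
  refine tendsto_finsetSum _ fun i _ => ?_
  simp_rw [← mul_smul_comm]
  simpa using (tendsto_average_exp_I_mul (μ i)).const_mul (a i)

lemma norm_sum_filter_freq_eq_zero_le {S : ℝ}
    (hS : ∀ x : ℝ, ‖∑ i ∈ s, a i * exp (I * μ i * x)‖ ≤ S) :
    ‖∑ i ∈ s with μ i = 0, a i‖ ≤ S := by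
  refine le_of_tendsto (tendsto_average_sum_mul_exp_I_mul s a μ).norm ?_
  filter_upwards [eventually_gt_atTop 0] with T hT
  rw [norm_smul, norm_inv, Real.norm_of_nonneg hT.le, inv_mul_le_iff₀ hT]
  simpa [abs_of_pos hT, mul_comm] using
    intervalIntegral.norm_integral_le_of_norm_le_const (a := 0) (b := T) fun x _ => hS x

end

lemma mul_exp_I_mul_mul_conj (a b : ℂ) (μ ν x : ℝ) :
    a * exp (I * μ * x) * conj (b * exp (I * ν * x)) = a * conj b * exp (I * ↑(μ - ν) * x) := by
  rw [map_mul, ← exp_conj, mul_mul_mul_comm, ← exp_add]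
  simp only [map_mul, conj_I, conj_ofReal]
  push_cast
  ring_nf

lemma sum_norm_sq_le_of_norm_sum_mul_exp_I_mul_le {ι : Type*} (s : Finset ι) (a : ι → ℂ)
    {μ : ι → ℝ} (hμ : Set.InjOn μ s) {S : ℝ}
    (hS : ∀ x : ℝ, ‖∑ i ∈ s, a i * exp (I * μ i * x)‖ ≤ S) :
    ∑ i ∈ s, ‖a i‖ ^ 2 ≤ S ^ 2 := by
  have hsq : ∀ x : ℝ, ‖∑ p ∈ s ×ˢ s, a p.1 * conj (a p.2) * exp (I * ↑(μ p.1 - μ p.2) * x)‖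
      ≤ S ^ 2 := fun x => by
    simp_rw [← mul_exp_I_mul_mul_conj, sum_product, ← mul_sum, ← sum_mul, ← map_sum, mul_conj,
      norm_real, normSq_eq_norm_sq, norm_pow, norm_norm]
    exact pow_le_pow_left₀ (norm_nonneg _) (hS x) 2
  have hdiag : ∑ p ∈ s ×ˢ s with μ p.1 - μ p.2 = 0, a p.1 * conj (a p.2)
      = ((∑ i ∈ s, ‖a i‖ ^ 2 : ℝ) : ℂ) := by
    classical
    rw [sum_filter, sum_product, ofReal_sum]
    refine sum_congr rfl fun i hi => ?_
    rw [sum_congr rfl fun j hj => if_congr (sub_eq_zero.trans (hμ.eq_iff hi hj)) rfl rfl,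
      sum_ite_eq, if_pos hi, mul_conj, normSq_eq_norm_sq, ofReal_pow]
  have := norm_sum_filter_freq_eq_zero_le _ _ _ hsq
  rwa [hdiag, norm_real, Real.norm_of_nonneg (by positivity)] at this

section Multinomial

variable {ι : Type*} [DecidableEq ι] (t : Finset ι) (c : ι → ℂ) (m : ℕ)

lemma sum_mul_exp_I_mul_pow (lam : ι → ℝ) (x : ℝ) :
    (∑ k ∈ t, c k * exp (I * lam k * x)) ^ m =
      ∑ b ∈ piAntidiag t m, (Nat.multinomial t b * ∏ k ∈ t, c k ^ b k) *
        exp (I * ↑(∑ k ∈ t, (b k : ℝ) * lam k) * x) := by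
  rw [sum_pow_eq_sum_piAntidiag]
  refine sum_congr rfl fun b _ => ?_
  simp_rw [mul_assoc, mul_pow, prod_mul_distrib, ← exp_nat_mul, ← exp_sum]
  push_cast
  rw [sum_mul, mul_sum]
  congr 3
  exact sum_congr rfl fun k _ => by ring

lemma sum_norm_multinomial_mul_prod_pow :
    ∑ b ∈ piAntidiag t m, ‖(Nat.multinomial t b : ℂ) * ∏ k ∈ t, c k ^ b k‖ =
      (∑ k ∈ t, ‖c k‖) ^ m := by
  simp_rw [sum_pow_eq_sum_piAntidiag, norm_mul, norm_natCast, norm_prod, norm_pow]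

end Multinomial

lemma card_piAntidiag_univ_le {ι : Type*} [Fintype ι] [DecidableEq ι] (m : ℕ) :
    #(piAntidiag (univ : Finset ι) m) ≤ (m + 1) ^ Fintype.card ι := by
  calc #(piAntidiag (univ : Finset ι) m)
      ≤ #(Fintype.piFinset fun _ : ι => range (m + 1)) := by
        refine card_le_card fun b hb => Fintype.mem_piFinset.2 fun k => ?_
        rw [mem_piAntidiag] at hb
        exact mem_range_succ_iff.2 (hb.1 ▸ single_le_sum (by simp) (mem_univ k))
    _ = (m + 1) ^ Fintype.card ι := by simp

lemma LinearIndependent.injective_sum_natCast_mul {ι : Type*} [Fintype ι] {lam : ι → ℝ}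
    (hlam : LinearIndependent ℚ lam) :
    Function.Injective fun b : ι → ℕ => ∑ k, (b k : ℝ) * lam k := by
  intro b b' h
  have := Fintype.linearIndependent_iff.1 hlam (fun k => (b k : ℚ) - b' k) (by
    simp only [sub_smul, sum_sub_distrib, Rat.smul_def]
    push_cast
    exact sub_eq_zero.2 h)
  funext k
  exact_mod_cast sub_eq_zero.1 (this k)

lemma sq_sum_norm_pow_le {ι : Type*} [Fintype ι] {lam : ι → ℝ} (hlam : LinearIndependent ℚ lam)
    (c : ι → ℂ) {S : ℝ} (hS : ∀ x : ℝ, ‖∑ k, c k * exp (I * lam k * x)‖ ≤ S) (m : ℕ) :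
    ((∑ k, ‖c k‖) ^ 2) ^ m ≤ ((m : ℝ) + 1) ^ Fintype.card ι * (S ^ 2) ^ m := by
  classical
  set B := piAntidiag (univ : Finset ι) m
  set a : (ι → ℕ) → ℂ := fun b => Nat.multinomial univ b * ∏ k, c k ^ b k
  have hpow : ∀ x : ℝ, ‖∑ b ∈ B, a b * exp (I * ↑(∑ k, (b k : ℝ) * lam k) * x)‖ ≤ S ^ m :=
    fun x => by
      rw [← sum_mul_exp_I_mul_pow, norm_pow]
      exact pow_le_pow_left₀ (norm_nonneg _) (hS x) m
  have hbessel := sum_norm_sq_le_of_norm_sum_mul_exp_I_mul_le B a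
    hlam.injective_sum_natCast_mul.injOn hpow
  calc ((∑ k, ‖c k‖) ^ 2) ^ m = (∑ b ∈ B, ‖a b‖) ^ 2 := by
        rw [sum_norm_multinomial_mul_prod_pow, ← pow_mul, ← pow_mul, mul_comm]
    _ ≤ #B * ∑ b ∈ B, ‖a b‖ ^ 2 := sq_sum_le_card_mul_sum_sq
    _ ≤ ((m : ℝ) + 1) ^ Fintype.card ι * (S ^ m) ^ 2 := by
        gcongr
        exact_mod_cast card_piAntidiag_univ_le m
    _ = ((m : ℝ) + 1) ^ Fintype.card ι * (S ^ 2) ^ m := by ring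

lemma le_of_forall_pow_le_mul_pow {A B : ℝ} (hB : 0 ≤ B) (n : ℕ)
    (h : ∀ m : ℕ, A ^ m ≤ ((m : ℝ) + 1) ^ n * B ^ m) : A ≤ B := by
  by_contra! hBA
  have hA : 0 < A := hB.trans_lt hBA
  set r := B / A
  have hr : |r| < 1 := by
    rw [abs_of_nonneg (by positivity)]
    exact (div_lt_one hA).2 hBA
  have hsmall : ∀ᶠ m : ℕ in atTop, 2 ^ n * ((m : ℝ) ^ n * r ^ m) < 1 :=
    ((tendsto_pow_const_mul_const_pow_of_abs_lt_one n hr).const_mul (2 ^ n)).eventually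
      (gt_mem_nhds (by simp))
  obtain ⟨m, hm, hm1⟩ := (hsmall.and (eventually_ge_atTop 1)).exists
  have hle : 1 ≤ ((m : ℝ) + 1) ^ n * r ^ m := by
    rw [div_pow, ← mul_div_assoc, le_div_iff₀ (by positivity), one_mul]
    exact h m
  have hm_two : (m : ℝ) + 1 ≤ 2 * m := by
    have : (1 : ℝ) ≤ m := by exact_mod_cast hm1
    linarith
  have hle_two : ((m : ℝ) + 1) ^ n * r ^ m ≤ 2 ^ n * ((m : ℝ) ^ n * r ^ m) := by
    rw [← mul_assoc, ← mul_pow]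
    gcongr
  linarith

theorem stmt_2 (n : ℕ) (lam : Fin n → ℝ) (c : Fin n → ℂ)
    (hindep : ∀ r : Fin n → ℚ, (∑ k, (r k : ℝ) * lam k) = 0 → ∀ k, r k = 0)
    (f : ℝ → ℂ)
    (hf : ∀ x : ℝ, f x = ∑ k, c k * Complex.exp (Complex.I * (lam k : ℂ) * (x : ℂ))) :
    (⨆ x : ℝ, ‖f x‖) = ∑ k, ‖c k‖ := by
  have hlam : LinearIndependent ℚ lam :=
    Fintype.linearIndependent_iff.2 fun r hr => hindep r (by simpa [Rat.smul_def] using hr)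
  have hle_sum : ∀ x, ‖f x‖ ≤ ∑ k, ‖c k‖ := fun x => hf x ▸ norm_sum_mul_exp_I_mul_le _ _ _ x
  have hbdd : BddAbove (Set.range fun x => ‖f x‖) := ⟨_, Set.forall_mem_range.2 hle_sum⟩
  have hS : ∀ x : ℝ, ‖∑ k, c k * exp (I * lam k * x)‖ ≤ ⨆ x, ‖f x‖ :=
    fun x => hf x ▸ le_ciSup hbdd x
  have hS0 : 0 ≤ ⨆ x, ‖f x‖ := (norm_nonneg _).trans (le_ciSup hbdd 0)
  have hsq := le_of_forall_pow_le_mul_pow (sq_nonneg _) _ (sq_sum_norm_pow_le hlam c hS)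
  exact le_antisymm (ciSup_le hle_sum)
    ((pow_le_pow_iff_left₀ (by positivity) hS0 two_ne_zero).1 hsq)
end

section
/- Let the real numbers λ_1,…,λ_n be linearly independent over the field of rational numbers, let c_1,…,c_n be complex numbers, and let f(x)=∑_{k=1}^n c_k e^{iλ_k x}. Then inf_{x∈ℝ} |f(x)| ≤ min_{ε∈{−1,1}^n} |∑_{k=1}^n ε_k |c_k||. -/
/-!
Put `F z = ∑ cₖ e^{2πi zₖ}` on the torus `(ℝ/ℤ)ⁿ`. Then `f` is `F` along the winding line
`x ↦ (λₖ x / 2π)ₖ`, and at `zₖ = -arg(εₖ cₖ) / 2π` one has `|F z| = |∑ εₖ |cₖ||`, so it suffices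
that the winding line is dense (Kronecker). Its closure `G` is a closed subgroup. Push the Haar
measure of `G` to the torus and compare it with the Haar measure of the torus: for `m ≠ 0`,
rational independence gives a point `g` of the line with `χₘ(g) = -1`, and both measures are
invariant under `g`, so both integrate `χₘ` to `0`. The characters span a dense subspace of
`C((ℝ/ℤ)ⁿ, ℂ)`, so the two measures agree; hence the open set `Gᶜ` is Haar-null, i.e. empty.
-/

/-- The set of values `|∑ εₖ aₖ|` over all sign choices `εₖ ∈ {-1, 1}`;
its infimum is the partition minimum of the numbers `a k`. -/
def partitionValues (n : ℕ) (a : Fin n → ℝ) : Set ℝ :=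
  {m | ∃ ε : Fin n → ℝ, (∀ k, ε k = 1 ∨ ε k = -1) ∧ m = |∑ k, ε k * a k|}

open MeasureTheory Measure TopologicalSpace Submodule Complex

section CompactAddGroup

variable {T : Type*} [AddGroup T] [TopologicalSpace T] [IsTopologicalAddGroup T]
  [MeasurableSpace T] [BorelSpace T]

instance isProbabilityMeasure_addHaarMeasure_top [CompactSpace T] :
    IsProbabilityMeasure (addHaarMeasure (⊤ : PositiveCompacts T)) :=
  ⟨by simpa using addHaarMeasure_self (K₀ := (⊤ : PositiveCompacts T))⟩

lemma AddSubgroup.exists_invariant_probabilityMeasure_of_isClosed [CompactSpace T]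
    {G : AddSubgroup T} (hG : IsClosed (G : Set T)) :
    ∃ μ : Measure T, IsProbabilityMeasure μ ∧ μ (G : Set T)ᶜ = 0 ∧
      ∀ g ∈ G, MeasurePreserving (g + ·) μ μ := by
  have : CompactSpace G := isCompact_iff_compactSpace.mp hG.isCompact
  have hval : Measurable (Subtype.val : G → T) := measurable_subtype_coe
  refine ⟨(addHaarMeasure (⊤ : PositiveCompacts G)).map Subtype.val,
    isProbabilityMeasure_map hval.aemeasurable, ?_, fun g hg => ⟨measurable_const_add g, ?_⟩⟩
  · rw [map_apply hval hG.isOpen_compl.measurableSet, Set.preimage_compl,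
      Subtype.coe_preimage_self, Set.compl_univ, measure_empty]
  · rw [Measure.map_map (measurable_const_add g) hval,
      show (g + ·) ∘ Subtype.val = Subtype.val ∘ (⟨g, hg⟩ + · : G → G) from rfl,
      ← Measure.map_map hval (measurable_const_add _), (measurePreserving_add_left _ _).map_eq]

lemma integral_eq_zero_of_measurePreserving_add_left {μ : Measure T} {χ : T → ℂ} {g : T}
    (hμ : MeasurePreserving (g + ·) μ μ) (hχ : ∀ z, χ (g + z) = χ g * χ z) (hg : χ g ≠ 1) :
    ∫ z, χ z ∂μ = 0 := by
  have hfix : ∫ z, χ z ∂μ = χ g * ∫ z, χ z ∂μ := by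
    rw [← integral_const_mul, ← hμ.integral_comp' (f := MeasurableEquiv.addLeft g)]
    exact integral_congr_ae (.of_forall fun z => hχ z)
  have : (χ g - 1) * ∫ z, χ z ∂μ = 0 := by linear_combination -hfix
  exact (mul_eq_zero.mp this).resolve_left (sub_ne_zero.mpr hg)

end CompactAddGroup

lemma fourier_coe_div_two_pi (n : ℤ) (t : ℝ) :
    fourier n ((t / (2 * Real.pi) : ℝ) : UnitAddCircle) = exp (n * t * I) := by
  rw [fourier_coe_apply]
  congr 1
  push_cast
  field_simp

lemma exists_mul_fourier_one_eq_norm (z : ℂ) :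
    ∃ t : UnitAddCircle, z * fourier 1 t = ‖z‖ := by
  refine ⟨((-z.arg / (2 * Real.pi) : ℝ) : UnitAddCircle), ?_⟩
  rw [fourier_coe_div_two_pi]
  nth_rewrite 1 [← norm_mul_exp_arg_mul_I z]
  rw [mul_assoc, ← exp_add]
  simp

lemma ContinuousMap.integral_eq_of_dense_span {X : Type*} [TopologicalSpace X] [CompactSpace X]
    [MeasurableSpace X] [BorelSpace X] {μ ν : Measure X} [IsFiniteMeasure μ] [IsFiniteMeasure ν]
    {s : Set C(X, ℂ)} (hs : Dense (span ℂ s : Set C(X, ℂ)))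
    (h : ∀ F ∈ s, ∫ x, F x ∂μ = ∫ x, F x ∂ν) (F : C(X, ℂ)) :
    ∫ x, F x ∂μ = ∫ x, F x ∂ν := by
  have hI : ∀ (ρ : Measure X) [IsFiniteMeasure ρ] (F : C(X, ℂ)),
      (L1.integralCLM' ℂ ∘L toLp 1 ρ ℂ) F = ∫ x, F x ∂ρ := fun ρ _ F => by
    rw [ContinuousLinearMap.comp_apply, ← L1.integral_eq', L1.integral_eq_integral]
    exact integral_congr_ae (ContinuousMap.coeFn_toLp ρ F)
  have := ContinuousLinearMap.ext_on hs (f := L1.integralCLM' ℂ ∘L toLp 1 μ ℂ)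
    (g := L1.integralCLM' ℂ ∘L toLp 1 ν ℂ) fun F hF => by simpa only [hI] using h F hF
  simpa only [hI] using congr($this F)

namespace UnitAddTorus

variable {d : Type*}

noncomputable def windingLine (lam : d → ℝ) : ℝ →+ UnitAddTorus d where
  toFun x k := ((lam k * x / (2 * Real.pi) : ℝ) : UnitAddCircle)
  map_zero' := by ext; simp
  map_add' x y := by ext; simp [mul_add, add_div]

lemma windingLine_apply (lam : d → ℝ) (x : ℝ) (k : d) :
    windingLine lam x k = ((lam k * x / (2 * Real.pi) : ℝ) : UnitAddCircle) := rfl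

variable [Fintype d]

lemma mFourier_apply_add (m : d → ℤ) (y z : UnitAddTorus d) :
    mFourier m (y + z) = mFourier m y * mFourier m z := by
  simp only [mFourier, ContinuousMap.coe_mk, Pi.add_apply, fourier_apply, smul_add,
    AddCircle.toCircle_add, Circle.coe_mul, Finset.prod_mul_distrib]

theorem measure_ext_of_integral_mFourier {μ ν : Measure (UnitAddTorus d)} [IsFiniteMeasure μ]
    [IsFiniteMeasure ν] (h : ∀ m, ∫ z, mFourier m z ∂μ = ∫ z, mFourier m z ∂ν) : μ = ν := by
  refine ext_of_forall_integral_eq_of_IsFiniteMeasure fun f => ?_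
  have := ContinuousMap.integral_eq_of_dense_span (μ := μ) (ν := ν) (s := Set.range mFourier)
    (dense_iff_topologicalClosure_eq_top.mpr span_mFourier_closure_eq_top)
    (by rintro - ⟨m, rfl⟩; exact h m) ⟨fun z => (f z : ℂ), by fun_prop⟩
  simp only [ContinuousMap.coe_mk, integral_complex_ofReal] at this
  exact_mod_cast this

theorem addSubgroup_eq_top_of_mFourier_ne_one {G : AddSubgroup (UnitAddTorus d)}
    (hG : IsClosed (G : Set (UnitAddTorus d))) (h : ∀ m ≠ 0, ∃ g ∈ G, mFourier m g ≠ 1) :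
    G = ⊤ := by
  obtain ⟨μ, _, hμG, hμ⟩ := G.exists_invariant_probabilityMeasure_of_isClosed hG
  let ν := addHaarMeasure (⊤ : PositiveCompacts (UnitAddTorus d))
  have hμν : μ = ν := measure_ext_of_integral_mFourier fun m => by
    obtain rfl | hm := eq_or_ne m 0
    · simp [mFourier_zero]
    obtain ⟨g, hg, hχ⟩ := h m hm
    rw [integral_eq_zero_of_measurePreserving_add_left (hμ g hg) (mFourier_apply_add m g) hχ,
      integral_eq_zero_of_measurePreserving_add_left (measurePreserving_add_left ν g)
        (mFourier_apply_add m g) hχ]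
  refine (AddSubgroup.eq_top_iff' G).mpr fun z => by_contra fun hz => ?_
  exact (hG.isOpen_compl.measure_pos ν ⟨z, hz⟩).ne' (hμν ▸ hμG)

lemma mFourier_windingLine (m : d → ℤ) (lam : d → ℝ) (x : ℝ) :
    mFourier m (windingLine lam x) = exp ((∑ k, m k * lam k : ℝ) * x * I) := by
  simp only [mFourier, ContinuousMap.coe_mk, windingLine_apply, fourier_coe_div_two_pi,
    ← exp_sum]
  push_cast
  rw [Finset.sum_mul, Finset.sum_mul]
  simp only [mul_assoc]

theorem denseRange_windingLine {lam : d → ℝ}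
    (hlam : ∀ r : d → ℚ, ∑ k, (r k : ℝ) * lam k = 0 → ∀ k, r k = 0) :
    DenseRange (windingLine lam) := by
  have htop := addSubgroup_eq_top_of_mFourier_ne_one
    (AddSubgroup.isClosed_topologicalClosure (windingLine lam).range) fun m hm => ?_
  · rw [DenseRange, dense_iff_closure_eq, ← AddMonoidHom.coe_range,
      ← AddSubgroup.topologicalClosure_coe, htop, AddSubgroup.coe_top]
  have hs : ∑ k, (m k : ℝ) * lam k ≠ 0 := fun hs => hm <| funext fun k => by
    exact_mod_cast hlam (fun k => m k) (by simpa using hs) k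
  refine ⟨windingLine lam (Real.pi / ∑ k, (m k : ℝ) * lam k),
    (windingLine lam).range.le_topologicalClosure ⟨_, rfl⟩, ?_⟩
  rw [mFourier_windingLine, ← ofReal_mul, mul_div_cancel₀ _ hs, exp_pi_mul_I]
  norm_num

end UnitAddTorus

theorem stmt_4 (n : ℕ) (lam : Fin n → ℝ) (c : Fin n → ℂ)
    (hindep : ∀ r : Fin n → ℚ, (∑ k, (r k : ℝ) * lam k) = 0 → ∀ k, r k = 0)
    (f : ℝ → ℂ)
    (hf : ∀ x : ℝ, f x = ∑ k, c k * Complex.exp (Complex.I * (lam k : ℂ) * (x : ℂ))) :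
    (⨅ x : ℝ, ‖f x‖) ≤ sInf (partitionValues n fun k => ‖c k‖) := by
  refine le_csInf ⟨_, fun _ => 1, fun _ => Or.inl rfl, rfl⟩ ?_
  rintro _ ⟨ε, hε, rfl⟩
  set F : UnitAddTorus (Fin n) → ℂ := fun z => ∑ k, c k * fourier 1 (z k)
  have hfF : ∀ x, f x = F (UnitAddTorus.windingLine lam x) := fun x => by
    simp only [hf, F, UnitAddTorus.windingLine_apply, fourier_coe_div_two_pi]
    congr! 3
    push_cast
    ring
  choose w hw using fun k => exists_mul_fourier_one_eq_norm ((ε k : ℂ) * c k)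
  have hFw : F w = ∑ k, ε k * ‖c k‖ := by
    push_cast
    refine Finset.sum_congr rfl fun k _ => ?_
    obtain ⟨hεk, hεabs⟩ : (ε k : ℂ) * ε k = 1 ∧ |ε k| = 1 := by
      rcases hε k with h | h <;> simp [h]
    have hk := hw k
    rw [norm_mul, norm_real, Real.norm_eq_abs, hεabs, one_mul] at hk
    linear_combination (ε k : ℂ) * hk - c k * fourier 1 (w k) * hεk
  calc ⨅ x, ‖f x‖ ≤ ‖F w‖ :=
        (UnitAddTorus.denseRange_windingLine hindep).induction_on w
          (isClosed_le continuous_const (by fun_prop)) fun x =>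
          (ciInf_le ⟨0, by rintro - ⟨y, rfl⟩; positivity⟩ x).trans_eq (by rw [hfF])
    _ = |∑ k, ε k * ‖c k‖| := by rw [hFw, norm_real, Real.norm_eq_abs]
end

section
/- Let the real numbers λ_1,…,λ_n be linearly independent over the field of rational numbers, let c_1,…,c_n be complex numbers, let f(x)=∑_{k=1}^n c_k e^{iλ_k x}, and assume that r = inf_{x∈ℝ} |f(x)| > 0. Then r = min_{ε∈{−1,1}^n} |∑_{k=1}^n ε_k |c_k||; that is, the infimum of |f| equals the solution of the partition problem for |c_1|,…,|c_n|. -/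
/-!
By Kronecker's theorem the values `f x` come arbitrarily close to `∑ cₖ e^{iθₖ}` for every
`θ ∈ ℝⁿ`, so `r` bounds `|∑ cₖ e^{iθₖ}|` from below on the whole torus. Rotating each `cₖ` to
`±|cₖ|` shows that `r` is at most every partition value. Since `r > 0`, the polygon with sides
`|cₖ|` never closes, which forces one side `|cⱼ|` to be longer than all others together; then
`|cⱼ| - ∑_{k ≠ j} |cₖ|` is a partition value and, by the triangle inequality, a lower bound
for `|f|`.

Kronecker's theorem is proved with the nonnegative kernel `K x = ∏ₖ (2 + 2 cos (λₖ x - θₖ))ᵖ`.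
Its expansion into exponentials has constant term `C(2p, p)ⁿ` and otherwise frequencies
`∑ₖ mₖ λₖ` with `m ≠ 0`, which are nonzero by linear independence; so the mean of `K` over `ℝ`
is `C(2p, p)ⁿ`. If no `x` brought all `λₖ x` close to `θₖ` modulo `2π`, one factor of `K x` would
always be at most `4 q` with `q < 1`, and `K ≤ qᵖ 4ᵖⁿ < C(2p, p)ⁿ` for large `p`.
-/

open Complex Finset

theorem norm_sub_sum_erase_le_norm_sum {ι E : Type*} [DecidableEq ι] [SeminormedAddCommGroup E]
    {s : Finset ι} {j : ι} (hj : j ∈ s) (z : ι → E) :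
    ‖z j‖ - ∑ k ∈ s.erase j, ‖z k‖ ≤ ‖∑ k ∈ s, z k‖ := by
  rw [← add_sum_erase s z hj]
  have := norm_sub_le (z j + ∑ k ∈ s.erase j, z k) (∑ k ∈ s.erase j, z k)
  rw [add_sub_cancel_right] at this
  linarith [norm_sum_le (s.erase j) z]

theorem sum_ite_eq_sub_sum_erase {ι R : Type*} [DecidableEq ι] [AddCommGroup R]
    {s : Finset ι} {j : ι} (hj : j ∈ s) (a : ι → R) :
    ∑ k ∈ s, (if k = j then a k else -a k) = a j - ∑ k ∈ s.erase j, a k := by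
  rw [← add_sum_erase s _ hj, if_pos rfl, sum_congr rfl fun k hk => if_neg (ne_of_mem_erase hk),
    sum_neg_distrib, sub_eq_add_neg]

theorem sum_ofReal_mul_exp_ite_eq {ι : Type*} [DecidableEq ι] {s : Finset ι} {j : ι}
    (hj : j ∈ s) (a : ι → ℝ) :
    ∑ k ∈ s, (a k : ℂ) * exp ((if k = j then 0 else Real.pi : ℝ) * I)
      = ((a j - ∑ k ∈ s.erase j, a k : ℝ) : ℂ) := by
  rw [← sum_ite_eq_sub_sum_erase hj, ofReal_sum]
  refine sum_congr rfl fun k _ => ?_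
  by_cases hk : k = j <;> simp [hk]

theorem Finset.prod_le_mul_pow_card {ι : Type*} {s : Finset ι} {f : ι → ℝ} {j : ι} (hj : j ∈ s)
    {t M : ℝ} (h0 : ∀ k ∈ s, 0 ≤ f k) (hM : ∀ k ∈ s, f k ≤ M) (hj_le : f j ≤ t * M) :
    ∏ k ∈ s, f k ≤ t * M ^ s.card := by
  classical
  rw [← mul_prod_erase s f hj, ← card_erase_add_one hj, pow_succ', ← mul_assoc]
  refine mul_le_mul hj_le ?_ (prod_nonneg fun k hk => h0 k (mem_of_mem_erase hk))
    ((h0 j hj).trans hj_le)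
  exact (prod_le_prod (fun k hk => h0 k (mem_of_mem_erase hk))
    fun k hk => hM k (mem_of_mem_erase hk)).trans_eq (prod_const M)

theorem exists_sum_erase_lt_of_forall_sum_ne_zero {ι : Type*} [DecidableEq ι] (s : Finset ι)
    {a : ι → ℝ} (ha : ∀ k ∈ s, 0 ≤ a k)
    (h : ∀ θ : ι → ℝ, ∑ k ∈ s, (a k : ℂ) * exp (θ k * I) ≠ 0) :
    ∃ j ∈ s, ∑ k ∈ s.erase j, a k < a j := by
  induction s using Finset.induction_on with
  | empty => exact absurd (by simp) (h 0)
  | insert i s hi ih =>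
    set z : (ι → ℝ) → ℂ := fun θ => ∑ k ∈ s, (a k : ℂ) * exp (θ k * I)
    have hsum : ∀ θ, ∑ k ∈ insert i s, (a k : ℂ) * exp (θ k * I) = a i * exp (θ i * I) + z θ :=
      fun θ => sum_insert hi
    -- if `‖z θ‖ = a i`, turning the `i`-th term alone closes the polygon
    have hz_ne : ∀ θ, ‖z θ‖ ≠ a i := by
      intro θ hθ
      have hz' : z (Function.update θ i (arg (-z θ))) = z θ := sum_congr rfl fun k hk => by
        rw [Function.update_of_ne (ne_of_mem_of_not_mem hk hi)]
      apply h (Function.update θ i (arg (-z θ)))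
      rw [hsum, hz', Function.update_self, ← hθ, ← norm_neg, norm_mul_exp_arg_mul_I,
        neg_add_cancel]
    have hz_cont : Continuous fun θ => ‖z θ‖ := by fun_prop
    have hz_zero : ‖z 0‖ = ∑ k ∈ s, a k := by
      simp only [z, Pi.zero_apply, ofReal_zero, zero_mul, exp_zero, mul_one]
      rw [← ofReal_sum, norm_real,
        Real.norm_of_nonneg (sum_nonneg fun k hk => ha k (mem_insert_of_mem hk))]
    rcases lt_or_ge (∑ k ∈ s, a k) (a i) with hi_dom | hi_le
    · exact ⟨i, mem_insert_self i s, by rwa [erase_insert hi]⟩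
    -- intermediate values: `‖z‖` never equals `a i` and exceeds it at `0`
    have hz_gt : ∀ θ, a i < ‖z θ‖ := by
      intro θ
      by_contra! hle
      obtain ⟨θ', hθ'⟩ := intermediate_value_univ θ 0 hz_cont ⟨hle, hz_zero ▸ hi_le⟩
      exact hz_ne θ' hθ'
    obtain ⟨j, hjs, hj⟩ := ih (fun k hk => ha k (mem_insert_of_mem hk))
      fun θ h0 => by simpa [z, h0] using (hz_gt θ).trans_le' (ha i (mem_insert_self i s))
    have hij : j ≠ i := ne_of_mem_of_not_mem hjs hi
    have := (hz_gt _).trans_eq (congrArg norm (sum_ofReal_mul_exp_ite_eq hjs a))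
    rw [norm_real, Real.norm_of_nonneg (by linarith)] at this
    refine ⟨j, mem_insert_of_mem hjs, ?_⟩
    rw [erase_insert_of_ne hij.symm, sum_insert fun h' => hi (mem_of_mem_erase h')]
    linarith

theorem norm_exp_mul_I_sub_exp_mul_I_sq (a b : ℝ) :
    ‖exp (a * I) - exp (b * I)‖ ^ 2 = 2 - 2 * Real.cos (a - b) := by
  rw [Complex.sq_norm, normSq_apply]
  simp only [sub_re, sub_im, exp_ofReal_mul_I_re, exp_ofReal_mul_I_im, Real.cos_sub]
  nlinarith [Real.sin_sq_add_cos_sq a, Real.sin_sq_add_cos_sq b]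

theorem exists_pow_mul_four_pow_pow_lt_centralBinom_pow (n : ℕ) {q : ℝ} (hq0 : 0 ≤ q)
    (hq1 : q < 1) : ∃ p : ℕ, q ^ p * (4 ^ p) ^ n < (p.centralBinom : ℝ) ^ n := by
  have hlim := tendsto_pow_const_mul_const_pow_of_abs_lt_one n (abs_lt.mpr ⟨by linarith, hq1⟩)
  obtain ⟨p, hp_lt, hp1⟩ :=
    ((hlim.eventually (gt_mem_nhds (by positivity : (0 : ℝ) < (2 ^ n)⁻¹))).and
      (Filter.eventually_ge_atTop 1)).exists
  refine ⟨p, ?_⟩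
  have hcb : (0 : ℝ) < p.centralBinom := by exact_mod_cast p.centralBinom_pos
  have h4 : (4 : ℝ) ^ p ≤ 2 * p * p.centralBinom := by
    exact_mod_cast Nat.four_pow_le_two_mul_self_mul_centralBinom p hp1
  calc q ^ p * (4 ^ p) ^ n ≤ q ^ p * (2 * p * p.centralBinom) ^ n := by gcongr
    _ = 2 ^ n * ((p : ℝ) ^ n * q ^ p) * (p.centralBinom : ℝ) ^ n := by ring
    _ < 2 ^ n * (2 ^ n)⁻¹ * (p.centralBinom : ℝ) ^ n := by gcongr
    _ = (p.centralBinom : ℝ) ^ n := by field_simp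

theorem two_add_two_cos_pow (w : ℝ) (p : ℕ) :
    (((2 + 2 * Real.cos w) ^ p : ℝ) : ℂ)
      = ∑ j ∈ range (2 * p + 1), ((2 * p).choose j : ℂ) * exp (((j : ℝ) - p) * w * I) := by
  set u := exp (w * I)
  have hu : exp (-w * I) * u = 1 := by rw [← exp_add]; simp
  have hcos : ((2 + 2 * Real.cos w : ℝ) : ℂ) = exp (-w * I) * (u + 1) ^ 2 := by
    push_cast
    rw [two_cos]
    linear_combination (-(u + 2)) * hu
  have hpow : ∀ j : ℕ, exp (-w * I) ^ p * u ^ j = exp (((j : ℝ) - p) * w * I) := by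
    intro j
    rw [← exp_nat_mul, ← exp_nat_mul, ← exp_add]
    congr 1
    push_cast
    ring
  rw [ofReal_pow, hcos, mul_pow, ← pow_mul, add_pow, mul_sum]
  refine sum_congr rfl fun j _ => ?_
  rw [one_pow, mul_one, ← hpow]
  ring

theorem prod_two_add_two_cos_pow {ι : Type*} [Fintype ι] [DecidableEq ι] (w : ι → ℝ) (p : ℕ) :
    ((∏ k, (2 + 2 * Real.cos (w k)) ^ p : ℝ) : ℂ)
      = ∑ g ∈ Fintype.piFinset fun _ => range (2 * p + 1),
          (∏ k, ((2 * p).choose (g k) : ℂ)) * exp ((∑ k, ((g k : ℝ) - p) * w k) * I) := by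
  rw [ofReal_prod, prod_congr rfl fun k _ => two_add_two_cos_pow (w k) p, prod_univ_sum]
  refine sum_congr rfl fun g _ => ?_
  rw [prod_mul_distrib, ofReal_sum, sum_mul, exp_sum]
  push_cast
  rfl

theorem prod_two_add_two_cos_pow_mul_sub {ι : Type*} [Fintype ι] [DecidableEq ι]
    (lam θ : ι → ℝ) (p : ℕ) (x : ℝ) :
    ((∏ k, (2 + 2 * Real.cos (lam k * x - θ k)) ^ p : ℝ) : ℂ)
      = ((p.centralBinom : ℝ) ^ Fintype.card ι : ℝ) +
        ∑ g ∈ (Fintype.piFinset fun _ => range (2 * p + 1)).erase fun _ => p,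
          (∏ k, ((2 * p).choose (g k) : ℂ)) * exp (-(∑ k, ((g k : ℝ) - p) * θ k) * I) *
            exp ((∑ k, ((g k : ℝ) - p) * lam k : ℝ) * I * x) := by
  have hdiag : (fun _ => p) ∈ Fintype.piFinset fun _ : ι => range (2 * p + 1) :=
    Fintype.mem_piFinset.mpr fun _ => mem_range.mpr (by omega)
  rw [prod_two_add_two_cos_pow (fun k => lam k * x - θ k) p, ← add_sum_erase _ _ hdiag]
  congr 1
  · simp [Nat.centralBinom_eq_two_mul_choose]
  · refine sum_congr rfl fun g _ => ?_
    have hphase : ∑ k, ((g k : ℝ) - p) * (lam k * x - θ k)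
        = -∑ k, ((g k : ℝ) - p) * θ k + (∑ k, ((g k : ℝ) - p) * lam k) * x := by
      simp only [mul_sub, sum_sub_distrib, sum_mul, mul_assoc]
      ring
    rw [mul_assoc, ← exp_add, hphase]
    congr 2
    push_cast
    ring

theorem norm_integral_exp_mul_I_le {b : ℝ} (hb : b ≠ 0) (T : ℝ) :
    ‖∫ x in (0 : ℝ)..T, exp (b * I * x)‖ ≤ 2 / |b| := by
  have hbI : (b : ℂ) * I ≠ 0 := mul_ne_zero (ofReal_ne_zero.mpr hb) I_ne_zero
  rw [integral_exp_mul_complex hbI, norm_div, norm_mul, norm_I, mul_one, norm_real,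
    Real.norm_eq_abs]
  gcongr
  calc ‖exp (b * I * T) - exp (b * I * (0 : ℝ))‖
      ≤ ‖exp (b * I * T)‖ + ‖exp (b * I * (0 : ℝ))‖ := norm_sub_le _ _
    _ = 2 := by norm_num [norm_exp]

theorem le_of_forall_le_of_eq_add_sum_exp {ι : Type*} {K : ℝ → ℝ} {D U : ℝ} (s : Finset ι)
    (b : ι → ℂ) {β : ι → ℝ} (hβ : ∀ g ∈ s, β g ≠ 0)
    (hK : ∀ x, (K x : ℂ) = D + ∑ g ∈ s, b g * exp (β g * I * x)) (hU : ∀ x, K x ≤ U) :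
    D ≤ U := by
  have hK_cont : Continuous K := by
    have : K = fun x : ℝ => (D + ∑ g ∈ s, b g * exp (β g * I * x)).re :=
      funext fun x => by rw [← hK x, ofReal_re]
    rw [this]
    fun_prop
  set B := ∑ g ∈ s, ‖b g‖ * (2 / |β g|)
  -- the oscillating terms have bounded integrals, so `∫₀ᵀ K` grows like `D T`
  have hint : ∀ T, D * T - B ≤ ∫ x in (0 : ℝ)..T, K x := by
    intro T
    have hcast : ((∫ x in (0 : ℝ)..T, K x : ℝ) : ℂ) - D * T
        = ∑ g ∈ s, b g * ∫ x in (0 : ℝ)..T, exp (β g * I * x) := by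
      rw [← intervalIntegral.integral_ofReal, intervalIntegral.integral_congr fun x _ => hK x,
        intervalIntegral.integral_add intervalIntegrable_const, intervalIntegral.integral_finsetSum]
      · simp only [intervalIntegral.integral_const, sub_zero, real_smul,
          intervalIntegral.integral_const_mul]
        ring
      · intro g _; exact (by fun_prop : Continuous _).intervalIntegrable _ _
      · exact (by fun_prop : Continuous _).intervalIntegrable _ _
    have hbound : ‖((∫ x in (0 : ℝ)..T, K x : ℝ) : ℂ) - D * T‖ ≤ B := by
      rw [hcast]
      refine (norm_sum_le _ _).trans (sum_le_sum fun g hg => ?_)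
      rw [norm_mul]
      exact mul_le_mul_of_nonneg_left (norm_integral_exp_mul_I_le (hβ g hg) T) (norm_nonneg _)
    rw [← ofReal_mul, ← ofReal_sub, norm_real, Real.norm_eq_abs] at hbound
    linarith [neg_abs_le ((∫ x in (0 : ℝ)..T, K x) - D * T)]
  have hle : ∀ T, 0 ≤ T → ∫ x in (0 : ℝ)..T, K x ≤ U * T := fun T hT => by
    simpa [mul_comm] using intervalIntegral.integral_mono_on (μ := MeasureTheory.volume) hT
      (hK_cont.intervalIntegrable 0 T) intervalIntegrable_const fun x _ => hU x
  by_contra! hUD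
  have hB : 0 ≤ B := sum_nonneg fun g _ => by positivity
  set T := (B + 1) / (D - U)
  have hT : (D - U) * T = B + 1 := mul_div_cancel₀ _ (sub_ne_zero.mpr hUD.ne')
  linarith [(hint T).trans (hle T (by positivity))]

theorem exists_forall_norm_exp_mul_I_sub_lt {ι : Type*} [Fintype ι] {lam : ι → ℝ}
    (hindep : ∀ r : ι → ℚ, ∑ k, (r k : ℝ) * lam k = 0 → ∀ k, r k = 0) (θ : ι → ℝ) {ε : ℝ}
    (hε : 0 < ε) : ∃ x : ℝ, ∀ k, ‖exp ((lam k * x : ℝ) * I) - exp (θ k * I)‖ < ε := by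
  classical
  by_contra! hfar
  set q := 1 - ε ^ 2 / 4 with hq
  have hcos : ∀ x, ∃ k, 2 + 2 * Real.cos (lam k * x - θ k) ≤ 4 * q := fun x => by
    obtain ⟨k, hk⟩ := hfar x
    refine ⟨k, ?_⟩
    linarith [norm_exp_mul_I_sub_exp_mul_I_sq (lam k * x) (θ k), pow_le_pow_left₀ hε.le hk 2]
  have hq0 : 0 ≤ q := by
    obtain ⟨k, hk⟩ := hcos 0
    nlinarith [Real.neg_one_le_cos (lam k * 0 - θ k)]
  obtain ⟨p, hp⟩ := exists_pow_mul_four_pow_pow_lt_centralBinom_pow (Fintype.card ι) hq0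
    (by have := pow_pos hε 2; linarith)
  have hK_le : ∀ x, ∏ k, (2 + 2 * Real.cos (lam k * x - θ k)) ^ p ≤ q ^ p * (4 ^ p) ^ Fintype.card ι := fun x => by
    obtain ⟨k, hk⟩ := hcos x
    refine prod_le_mul_pow_card (mem_univ k)
      (fun j _ => pow_nonneg (by nlinarith [Real.neg_one_le_cos (lam j * x - θ j)]) p)
      (fun j _ => pow_le_pow_left₀ (by nlinarith [Real.neg_one_le_cos (lam j * x - θ j)])
        (by nlinarith [Real.cos_le_one (lam j * x - θ j)]) p) ?_
    rw [← mul_pow, mul_comm q]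
    exact pow_le_pow_left₀ (by nlinarith [Real.neg_one_le_cos (lam k * x - θ k)]) hk p
  set G := Fintype.piFinset fun _ : ι => range (2 * p + 1)
  have hβ : ∀ g ∈ G.erase fun _ => p, ∑ k, ((g k : ℝ) - p) * lam k ≠ 0 := by
    intro g hg h0
    refine ne_of_mem_erase hg (funext fun k => ?_)
    have := hindep (fun k => (g k : ℚ) - p) (by push_cast; exact h0) k
    exact_mod_cast sub_eq_zero.mp this
  exact (le_of_forall_le_of_eq_add_sum_exp _ _ hβ (prod_two_add_two_cos_pow_mul_sub lam θ p)
    hK_le).not_gt hp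

noncomputable def expSum {ι : Type*} [Fintype ι] (c : ι → ℂ) (θ : ι → ℝ) : ℂ :=
  ∑ k, c k * exp (θ k * I)

section expSum

variable {ι : Type*} [Fintype ι]

theorem expSum_ofReal_norm (c : ι → ℂ) (θ : ι → ℝ) :
    expSum (fun k => (‖c k‖ : ℂ)) θ = expSum c fun k => θ k - arg (c k) := by
  refine sum_congr rfl fun k _ => ?_
  conv_rhs => rw [← norm_mul_exp_arg_mul_I (c k)]
  rw [mul_assoc, ← exp_add]
  push_cast
  ring_nf

theorem norm_expSum_sub_expSum_le (c : ι → ℂ) (θ φ : ι → ℝ) :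
    ‖expSum c θ - expSum c φ‖ ≤ ∑ k, ‖c k‖ * ‖exp (θ k * I) - exp (φ k * I)‖ := by
  rw [expSum, expSum, ← sum_sub_distrib]
  refine (norm_sum_le _ _).trans_eq (sum_congr rfl fun k _ => ?_)
  rw [← mul_sub, norm_mul]

theorem iInf_norm_expSum_le {lam : ι → ℝ}
    (hindep : ∀ r : ι → ℚ, ∑ k, (r k : ℝ) * lam k = 0 → ∀ k, r k = 0) (c : ι → ℂ)
    (θ : ι → ℝ) : ⨅ x : ℝ, ‖expSum c fun k => lam k * x‖ ≤ ‖expSum c θ‖ := by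
  refine le_of_forall_pos_lt_add fun δ hδ => ?_
  set S := ∑ k, ‖c k‖
  have hS : 0 ≤ S := sum_nonneg fun k _ => norm_nonneg _
  obtain ⟨x, hx⟩ :=
    exists_forall_norm_exp_mul_I_sub_lt hindep θ (div_pos hδ (by linarith : 0 < S + 1))
  have hclose : ‖(expSum c fun k => lam k * x) - expSum c θ‖ < δ :=
    calc _ ≤ ∑ k, ‖c k‖ * ‖exp ((lam k * x : ℝ) * I) - exp (θ k * I)‖ :=
          norm_expSum_sub_expSum_le _ _ _
      _ ≤ S * (δ / (S + 1)) := by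
          rw [sum_mul]
          exact sum_le_sum fun k _ => mul_le_mul_of_nonneg_left (hx k).le (norm_nonneg _)
      _ < δ := by
          rw [mul_div_assoc', div_lt_iff₀ (by linarith)]
          nlinarith
  calc ⨅ x : ℝ, ‖expSum c fun k => lam k * x‖ ≤ ‖expSum c fun k => lam k * x‖ :=
        ciInf_le ⟨0, by rintro _ ⟨y, rfl⟩; exact norm_nonneg _⟩ x
    _ ≤ ‖expSum c θ‖ + ‖(expSum c fun k => lam k * x) - expSum c θ‖ :=
        norm_le_norm_add_norm_sub' _ _
    _ < ‖expSum c θ‖ + δ := by linarith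

theorem norm_sub_sum_erase_le_norm_expSum [DecidableEq ι] (c : ι → ℂ) (θ : ι → ℝ) (j : ι) :
    ‖c j‖ - ∑ k ∈ univ.erase j, ‖c k‖ ≤ ‖expSum c θ‖ := by
  simpa only [expSum, norm_mul, norm_exp_ofReal_mul_I, mul_one] using
    norm_sub_sum_erase_le_norm_sum (mem_univ j) fun k => c k * exp (θ k * I)

end expSum

theorem exists_norm_expSum_eq_of_mem_partitionValues {n : ℕ} (c : Fin n → ℂ) {v : ℝ}
    (hv : v ∈ partitionValues n fun k => ‖c k‖) : ∃ θ, ‖expSum c θ‖ = v := by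
  obtain ⟨ε, hε, rfl⟩ := hv
  set θ : Fin n → ℝ := fun k => if ε k = 1 then 0 else Real.pi
  refine ⟨fun k => θ k - arg (c k), ?_⟩
  rw [← expSum_ofReal_norm, ← Real.norm_eq_abs, ← norm_real, ofReal_sum]
  congr 1
  refine sum_congr rfl fun k _ => ?_
  rcases hε k with h | h <;> norm_num [θ, h]

theorem abs_sub_sum_erase_mem_partitionValues {n : ℕ} (a : Fin n → ℝ) (j : Fin n) :
    |a j - ∑ k ∈ univ.erase j, a k| ∈ partitionValues n a := by
  refine ⟨fun k => if k = j then 1 else -1, fun k => ?_, ?_⟩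
  · by_cases hk : k = j <;> simp [hk]
  · rw [← sum_ite_eq_sub_sum_erase (mem_univ j)]
    congr 1
    refine sum_congr rfl fun k _ => ?_
    by_cases hk : k = j <;> simp [hk]

theorem stmt_6 (n : ℕ) (lam : Fin n → ℝ) (c : Fin n → ℂ)
    (hindep : ∀ r : Fin n → ℚ, (∑ k, (r k : ℝ) * lam k) = 0 → ∀ k, r k = 0)
    (f : ℝ → ℂ)
    (hf : ∀ x : ℝ, f x = ∑ k, c k * Complex.exp (Complex.I * (lam k : ℂ) * (x : ℂ)))
    (r : ℝ) (hr : r = ⨅ x : ℝ, ‖f x‖) (hrpos : 0 < r) :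
    r = sInf (partitionValues n fun k => ‖c k‖) := by
  have hfx : ∀ x, f x = expSum c fun k => lam k * x := fun x => by
    refine (hf x).trans (sum_congr rfl fun k _ => ?_)
    congr 2
    push_cast
    ring
  have hlow : ∀ θ, r ≤ ‖expSum c θ‖ := fun θ => by
    simpa only [hr, hfx] using iInf_norm_expSum_le hindep c θ
  obtain ⟨j, -, hj⟩ := exists_sum_erase_lt_of_forall_sum_ne_zero univ
    (fun k _ => norm_nonneg (c k)) fun θ h0 => by
      have := hlow fun k => θ k - arg (c k)
      rw [← expSum_ofReal_norm, expSum, h0, norm_zero] at this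
      linarith
  have hmem := abs_sub_sum_erase_mem_partitionValues (fun k => ‖c k‖) j
  rw [abs_of_pos (sub_pos.mpr hj)] at hmem
  refine le_antisymm (le_csInf ⟨_, hmem⟩ fun v hv => ?_) ?_
  · obtain ⟨θ, rfl⟩ := exists_norm_expSum_eq_of_mem_partitionValues c hv
    exact hlow θ
  · have hbdd : BddBelow (partitionValues n fun k => ‖c k‖) :=
      ⟨0, by rintro _ ⟨_, _, rfl⟩; exact abs_nonneg _⟩
    refine (csInf_le hbdd hmem).trans (hr ▸ le_ciInf fun x => ?_)
    rw [hfx]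
    exact norm_sub_sum_erase_le_norm_expSum c _ j
end

section
/- Let λ_1,…,λ_n be arbitrary real numbers, let c_1,…,c_n be complex numbers, and let f(x)=∑_{k=1}^n c_k e^{iλ_k x}. Then sup_{x∈ℝ} |f(x)| ≤ ∑_{k=1}^n |c_k|, with equality sup_{x∈ℝ} |f(x)| = ∑_{k=1}^n |c_k| whenever λ_1,…,λ_n are linearly independent over the field of rational numbers. -/
/-!
The bound `sup |f| ≤ ∑ |c_k|` is the triangle inequality. For the reverse bound, put
`θ_k = arg c_k` and test `f` against the nonnegative weight
`P(x) = ∏_k |∑_{a ≤ N} e^{i a (θ_k + λ_k x)}|²`, a product of Fejér kernels. Expanding, `P` and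
`f P` are sums of exponentials `e^{i (∑_k m_k λ_k) x}` with `m ∈ ℤⁿ`, and by independence such an
exponential has mean value `1` when `m = 0` and `0` otherwise. Counting exponents gives
`mean P = (N+1)ⁿ` and `mean (f P) = N (N+1)ⁿ⁻¹ ∑ |c_k|`, while `|mean (f P)| ≤ sup |f| · mean P`.
Hence `N/(N+1) · ∑ |c_k| ≤ sup |f|` for every `N`.
-/

open Complex Filter Finset Topology

def HasMean (g : ℝ → ℂ) (m : ℂ) : Prop :=
  Tendsto (fun T : ℝ => ⨍ x in 0..T, g x) atTop (𝓝 m)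

namespace HasMean

theorem const_mul {g : ℝ → ℂ} {m : ℂ} (h : HasMean g m) (a : ℂ) :
    HasMean (fun x => a * g x) (a * m) := by
  refine (Tendsto.const_mul a h).congr fun T => ?_
  simp only [interval_average_eq, intervalIntegral.integral_const_mul, mul_smul_comm]

theorem sum {ι : Type*} (s : Finset ι) {g : ι → ℝ → ℂ} {m : ι → ℂ}
    (hc : ∀ i ∈ s, Continuous (g i)) (h : ∀ i ∈ s, HasMean (g i) (m i)) :
    HasMean (fun x => ∑ i ∈ s, g i x) (∑ i ∈ s, m i) := by
  refine (tendsto_finsetSum s h).congr fun T => ?_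
  simp only [interval_average_eq]
  rw [intervalIntegral.integral_finsetSum fun i hi => (hc i hi).intervalIntegrable _ _]
  simp only [Finset.smul_sum]

theorem norm_le {g : ℝ → ℂ} {P : ℝ → ℝ} {a b : ℂ} {M : ℝ} (hg : ∀ x, ‖g x‖ ≤ M)
    (hP : Continuous P) (hP0 : ∀ x, 0 ≤ P x) (ha : HasMean (fun x => g x * P x) a)
    (hb : HasMean (fun x => (P x : ℂ)) b) : ‖a‖ ≤ M * ‖b‖ := by
  refine le_of_tendsto_of_tendsto (Tendsto.norm ha) ((Tendsto.norm hb).const_mul M) ?_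
  filter_upwards [eventually_ge_atTop 0] with T hT
  have hint : ‖∫ x in 0..T, g x * P x‖ ≤ M * ∫ x in 0..T, P x := by
    rw [← intervalIntegral.integral_const_mul]
    refine intervalIntegral.norm_integral_le_of_norm_le hT (.of_forall fun x _ => ?_)
      ((continuous_const.mul hP).intervalIntegrable _ _)
    rw [norm_mul, norm_real, Real.norm_of_nonneg (hP0 x)]
    exact mul_le_mul_of_nonneg_right (hg x) (hP0 x)
  have hP_int : 0 ≤ ∫ x in 0..T, P x := intervalIntegral.integral_nonneg hT fun x _ => hP0 x
  simp only [interval_average_eq, sub_zero, norm_smul, intervalIntegral.integral_ofReal, norm_real,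
    Real.norm_of_nonneg hP_int, norm_inv, Real.norm_of_nonneg hT]
  rw [mul_left_comm]
  exact mul_le_mul_of_nonneg_left hint (inv_nonneg.mpr hT)

end HasMean

theorem hasMean_exp (μ : ℝ) :
    HasMean (fun x => cexp (I * μ * x)) (if μ = 0 then 1 else 0) := by
  split_ifs with hμ
  · refine tendsto_const_nhds.congr' ?_
    filter_upwards [eventually_gt_atTop 0] with T hT
    simp [hμ, interval_average_eq, hT.ne']
  · have hIμ : I * μ ≠ 0 := by simp [hμ]
    have hbound : ∀ T : ℝ, 0 < T → ‖⨍ x in 0..T, cexp (I * μ * x)‖ ≤ 2 / |μ| * T⁻¹ := by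
      intro T hT
      rw [interval_average_eq, integral_exp_mul_complex hIμ, norm_smul, sub_zero, norm_div,
        norm_mul, norm_I, norm_real, one_mul, norm_inv, Real.norm_of_nonneg hT.le, mul_comm,
        Real.norm_eq_abs]
      gcongr
      calc ‖cexp (I * μ * T) - cexp (I * μ * (0 : ℝ))‖
          ≤ ‖cexp (I * μ * T)‖ + ‖cexp (I * μ * (0 : ℝ))‖ := norm_sub_le _ _
        _ = 2 := by
          rw [mul_assoc, mul_assoc, ← ofReal_mul, ← ofReal_mul, norm_exp_I_mul_ofReal,
            norm_exp_I_mul_ofReal]; norm_num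
    refine squeeze_zero_norm' ?_ (by simpa using tendsto_inv_atTop_zero.const_mul (2 / |μ|))
    filter_upwards [eventually_gt_atTop 0] with T hT using hbound T hT

theorem hasMean_sum_exp {ι : Type*} (s : Finset ι) (a : ι → ℂ) (μ : ι → ℝ) :
    HasMean (fun x => ∑ i ∈ s, a i * cexp (I * μ i * x)) (∑ i ∈ s, if μ i = 0 then a i else 0) := by
  refine HasMean.sum s (fun i _ => by fun_prop) fun i _ => ?_
  simpa using (hasMean_exp (μ i)).const_mul (a i)

theorem hasMean_prod_sum_exp {κ ι : Type*} [Fintype κ] (s : Finset ι) (m : κ → ι → ℤ)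
    (θ ω : κ → ℝ) (hω : LinearIndependent ℤ ω) :
    HasMean (fun x => ∏ k, ∑ i ∈ s, cexp (↑(m k i * (θ k + ω k * x)) * I))
      ((∏ k, #{i ∈ s | m k i = 0} : ℕ) : ℂ) := by
  classical
  have hexpand : ∀ x : ℝ, ∏ k, ∑ i ∈ s, cexp (↑(m k i * (θ k + ω k * x)) * I)
      = ∑ p ∈ Fintype.piFinset fun _ => s, cexp (↑(∑ k, m k (p k) * θ k) * I) *
          cexp (I * ↑(∑ k, m k (p k) * ω k) * x) := by
    intro x
    rw [prod_univ_sum]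
    refine sum_congr rfl fun p _ => ?_
    rw [← exp_sum, ← exp_add]
    push_cast
    simp only [Finset.sum_mul, Finset.mul_sum, ← Finset.sum_add_distrib]
    congr 1
    refine sum_congr rfl fun k _ => ?_
    ring
  -- Independence: the frequency `∑ k, m k (p k) * ω k` vanishes only if every `m k (p k)` does.
  have hcoeff : ∀ p : κ → ι, (if ∑ k, (m k (p k) : ℝ) * ω k = 0 then
      cexp (↑(∑ k, m k (p k) * θ k) * I) else 0) = ∏ k, if m k (p k) = 0 then (1 : ℂ) else 0 := by
    intro p
    rw [prod_ite_zero, prod_const_one]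
    by_cases hp : ∑ k, (m k (p k) : ℝ) * ω k = 0
    · have hzero := Fintype.linearIndependent_iff.mp hω (fun k => m k (p k))
        (by simpa only [zsmul_eq_mul] using hp)
      simp_all
    · have : ¬ ∀ k ∈ univ, m k (p k) = 0 := fun h => hp (by simp_all)
      rw [if_neg hp, if_neg this]
  have h := hasMean_sum_exp (Fintype.piFinset fun _ => s)
    (fun p => cexp (↑(∑ k, m k (p k) * θ k) * I)) (fun p => ∑ k, (m k (p k) : ℝ) * ω k)
  rw [sum_congr rfl fun p _ => hcoeff p,
    ← prod_univ_sum (fun _ => s) fun k i => if m k i = 0 then (1 : ℂ) else 0] at h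
  simp only [HasMean, hexpand]
  convert h using 2
  push_cast [card_filter]
  rfl

noncomputable def fejerSum (N : ℕ) (s : ℤ) (t : ℝ) : ℂ :=
  ∑ q ∈ range (N + 1) ×ˢ range (N + 1), cexp (↑((((q.1 : ℤ) - q.2 + s : ℤ) : ℝ) * t) * I)

theorem fejerSum_eq (N : ℕ) (s : ℤ) (t : ℝ) :
    fejerSum N s t = cexp (↑(s * t) * I) * ↑(‖∑ a ∈ range (N + 1), cexp (↑(a * t) * I)‖ ^ 2) := by
  rw [ofReal_pow, ← mul_conj', map_sum, sum_mul_sum, mul_sum, fejerSum, sum_product]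
  refine sum_congr rfl fun a _ => ?_
  rw [mul_sum]
  refine sum_congr rfl fun b _ => ?_
  rw [← exp_conj, ← exp_add, ← exp_add]
  congr 1
  simp only [map_mul, conj_ofReal, conj_I]
  push_cast
  ring

theorem card_filter_sub_add_eq_zero (N : ℕ) (s : ℤ) :
    #{q ∈ range (N + 1) ×ˢ range (N + 1) | (q.1 : ℤ) - q.2 + s = 0} = N + 1 - s.natAbs := by
  have : {q ∈ range (N + 1) ×ˢ range (N + 1) | (q.1 : ℤ) - q.2 + s = 0}
      = (range (N + 1 - s.natAbs)).image fun a => (a + (-s).toNat, a + s.toNat) := by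
    ext ⟨a, b⟩
    simp only [mem_filter, mem_product, mem_range, mem_image, Prod.mk.injEq]
    constructor
    · rintro ⟨⟨ha, hb⟩, h⟩
      exact ⟨a - (-s).toNat, by omega, by omega, by omega⟩
    · rintro ⟨a, ha, rfl, rfl⟩
      omega
  rw [this, card_image_of_injective _ fun a b h => by simpa using congrArg Prod.fst h, card_range]

theorem prod_card_filter_sub_add_single_eq {κ : Type*} [Fintype κ] [DecidableEq κ] (N : ℕ)
    (l : κ) : (N + 1) * ∏ k, #{q ∈ range (N + 1) ×ˢ range (N + 1) |
      (q.1 : ℤ) - q.2 + (Pi.single l 1 : κ → ℤ) k = 0} = N * (N + 1) ^ Fintype.card κ := by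
  have hcard : ∀ k, #{q ∈ range (N + 1) ×ˢ range (N + 1) |
      (q.1 : ℤ) - q.2 + (Pi.single l 1 : κ → ℤ) k = 0} = if k = l then N else N + 1 := by
    intro k
    rw [card_filter_sub_add_eq_zero]
    by_cases hk : k = l <;> simp [hk]
  simp only [hcard]
  rw [Fintype.prod_eq_mul_prod_compl l, prod_congr rfl fun k hk => if_neg (by simpa using hk),
    if_pos rfl, mul_left_comm, ← Fintype.prod_eq_mul_prod_compl l fun _ => N + 1, prod_const,
    card_univ]

section FejerWeight

variable {κ : Type*} [Fintype κ]

noncomputable def fejerWeight (N : ℕ) (θ ω : κ → ℝ) (x : ℝ) : ℝ :=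
  ∏ k, ‖∑ a ∈ range (N + 1), cexp (↑(a * (θ k + ω k * x)) * I)‖ ^ 2

theorem ofReal_fejerWeight (N : ℕ) (θ ω : κ → ℝ) (x : ℝ) :
    (fejerWeight N θ ω x : ℂ) = ∏ k, fejerSum N 0 (θ k + ω k * x) := by
  simp [fejerWeight, fejerSum_eq]

theorem sum_mul_exp_mul_fejerWeight [DecidableEq κ] (N : ℕ) (ω : κ → ℝ) (c : κ → ℂ) (x : ℝ) :
    (∑ k, c k * cexp (I * ω k * x)) * fejerWeight N (fun k => arg (c k)) ω x
      = ∑ l, ‖c l‖ * ∏ k, fejerSum N ((Pi.single l 1 : κ → ℤ) k) (arg (c k) + ω k * x) := by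
  rw [sum_mul]
  refine sum_congr rfl fun l _ => ?_
  have hsingle : ∑ k, ((Pi.single l 1 : κ → ℤ) k : ℝ) * (arg (c k) + ω k * x)
      = arg (c l) + ω l * x := by
    rw [Fintype.sum_eq_single l fun k hk => by simp [hk]]
    simp
  calc c l * cexp (I * ω l * x) * fejerWeight N (fun k => arg (c k)) ω x
      = ‖c l‖ * (cexp (↑(arg (c l) + ω l * x) * I) * fejerWeight N (fun k => arg (c k)) ω x) := by
        conv_lhs => rw [← norm_mul_exp_arg_mul_I (c l)]
        simp only [ofReal_add, ofReal_mul, add_mul, exp_add]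
        ring_nf
    _ = _ := by
        simp only [fejerWeight, fejerSum_eq, prod_mul_distrib, ← exp_sum, ← sum_mul, ← ofReal_sum,
          hsingle]
        push_cast
        ring

variable (ω : κ → ℝ)

theorem hasMean_fejerWeight (hω : LinearIndependent ℤ ω) (N : ℕ) (θ : κ → ℝ) :
    HasMean (fun x => (fejerWeight N θ ω x : ℂ)) ((N + 1) ^ Fintype.card κ) := by
  simp only [ofReal_fejerWeight]
  have h := hasMean_prod_sum_exp (range (N + 1) ×ˢ range (N + 1))
    (fun _ q => (q.1 : ℤ) - q.2 + 0) θ ω hω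
  rw [prod_const, card_filter_sub_add_eq_zero, card_univ] at h
  rw [show ((N : ℂ) + 1) ^ Fintype.card κ = ((N + 1 - (0 : ℤ).natAbs) ^ Fintype.card κ : ℕ) by
    simp]
  exact h

theorem hasMean_sum_mul_exp_mul_fejerWeight [DecidableEq κ] (hω : LinearIndependent ℤ ω) (N : ℕ)
    (c : κ → ℂ) :
    HasMean (fun x => (∑ k, c k * cexp (I * ω k * x)) * fejerWeight N (fun k => arg (c k)) ω x)
      (∑ l, ‖c l‖ * ((∏ k, #{q ∈ range (N + 1) ×ˢ range (N + 1) |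
        (q.1 : ℤ) - q.2 + (Pi.single l 1 : κ → ℤ) k = 0} : ℕ) : ℂ)) := by
  simp only [sum_mul_exp_mul_fejerWeight]
  refine HasMean.sum _ (fun l _ => by unfold fejerSum; fun_prop) fun l _ => ?_
  exact HasMean.const_mul (hasMean_prod_sum_exp _ _ _ ω hω) _

theorem natCast_mul_sum_norm_le (hω : LinearIndependent ℤ ω) (c : κ → ℂ) {M : ℝ}
    (hM : ∀ x : ℝ, ‖∑ k, c k * cexp (I * ω k * x)‖ ≤ M) (N : ℕ) :
    N * ∑ k, ‖c k‖ ≤ (N + 1) * M := by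
  classical
  have hmean_le := HasMean.norm_le hM (by unfold fejerWeight; fun_prop)
    (fun x => by unfold fejerWeight; positivity) (hasMean_sum_mul_exp_mul_fejerWeight ω hω N c)
    (hasMean_fejerWeight ω hω N _)
  set A : κ → ℕ := fun l => ∏ k, #{q ∈ range (N + 1) ×ˢ range (N + 1) |
    (q.1 : ℤ) - q.2 + (Pi.single l 1 : κ → ℤ) k = 0}
  have hsum : (N + 1 : ℂ) * ∑ l, ‖c l‖ * (A l : ℂ)
      = ((N + 1) ^ Fintype.card κ * (N * ∑ l, ‖c l‖) : ℝ) := by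
    push_cast
    simp only [mul_sum]
    refine sum_congr rfl fun l _ => ?_
    have hcount : (((N + 1) * A l : ℕ) : ℂ) = ((N * (N + 1) ^ Fintype.card κ : ℕ) : ℂ) :=
      congrArg Nat.cast (prod_card_filter_sub_add_single_eq N l)
    push_cast at hcount
    linear_combination (‖c l‖ : ℂ) * hcount
  have hN : ‖(N : ℂ) + 1‖ = N + 1 := by exact_mod_cast Complex.norm_natCast (N + 1)
  have hkey : (N + 1) ^ Fintype.card κ * (N * ∑ l, ‖c l‖)
      ≤ (N + 1) ^ Fintype.card κ * ((N + 1) * M) := by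
    calc (N + 1) ^ Fintype.card κ * (N * ∑ l, ‖c l‖)
        = ‖(N + 1 : ℂ) * ∑ l, ‖c l‖ * (A l : ℂ)‖ := by
          rw [hsum, norm_real, Real.norm_of_nonneg (by positivity)]
      _ = (N + 1) * ‖∑ l, ‖c l‖ * (A l : ℂ)‖ := by rw [norm_mul, hN]
      _ ≤ (N + 1) * (M * ‖((N : ℂ) + 1) ^ Fintype.card κ‖) := by gcongr
      _ = (N + 1) ^ Fintype.card κ * ((N + 1) * M) := by
          rw [norm_pow, hN]
          ring
  exact le_of_mul_le_mul_left hkey (by positivity)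

theorem sum_norm_le_of_forall_norm_le (hω : LinearIndependent ℤ ω) (c : κ → ℂ) {M : ℝ}
    (hM : ∀ x : ℝ, ‖∑ k, c k * cexp (I * ω k * x)‖ ≤ M) : ∑ k, ‖c k‖ ≤ M := by
  have h : ∀ N : ℕ, (N / (N + 1) : ℝ) * ∑ k, ‖c k‖ ≤ M := fun N => by
    rw [div_mul_eq_mul_div, div_le_iff₀ (by positivity), mul_comm M]
    exact natCast_mul_sum_norm_le ω hω c hM N
  simpa using le_of_tendsto' ((tendsto_natCast_div_add_atTop (1 : ℝ)).mul_const _) h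

theorem norm_sum_mul_exp_le (c : κ → ℂ) (x : ℝ) :
    ‖∑ k, c k * cexp (I * ω k * x)‖ ≤ ∑ k, ‖c k‖ := by
  refine (norm_sum_le _ _).trans_eq (sum_congr rfl fun k _ => ?_)
  rw [norm_mul, mul_assoc, ← ofReal_mul, norm_exp_I_mul_ofReal, mul_one]

end FejerWeight

theorem stmt_17 (n : ℕ) (lam : Fin n → ℝ) (c : Fin n → ℂ)
    (f : ℝ → ℂ)
    (hf : ∀ x : ℝ, f x = ∑ k, c k * Complex.exp (Complex.I * (lam k : ℂ) * (x : ℂ))) :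
    (⨆ x : ℝ, ‖f x‖) ≤ ∑ k, ‖c k‖ ∧
    ((∀ r : Fin n → ℚ, (∑ k, (r k : ℝ) * lam k) = 0 → ∀ k, r k = 0) →
      (⨆ x : ℝ, ‖f x‖) = ∑ k, ‖c k‖) := by
  have hbound : ∀ x, ‖f x‖ ≤ ∑ k, ‖c k‖ := fun x => hf x ▸ norm_sum_mul_exp_le lam c x
  refine ⟨ciSup_le hbound, fun hind => (ciSup_le hbound).antisymm ?_⟩
  refine sum_norm_le_of_forall_norm_le lam ?_ c fun x => ?_
  · refine Fintype.linearIndependent_iff.mpr fun r hr k => ?_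
    exact_mod_cast hind (fun k => r k) (by simpa only [zsmul_eq_mul, Rat.cast_intCast] using hr) k
  · rw [← hf x]
    exact le_ciSup ⟨_, Set.forall_mem_range.mpr hbound⟩ x
end
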